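/- arXiv:1902.01997 — 2 statements merged into one kernel-verified Lean document; each statement's English description precedes it below -/
import Mathlib

section
/- Let B be a connected mutation-finite real quiver of rank 3. Then every weight of B is of the form 2cos(πm/d) for some integers d ≥ 1 and 0 ≤ m ≤ d/2; that is, for all i≠j there exist integers d ≥ 1 and 0 ≤ m ≤ d/2 with |b_ij| = 2cos(πm/d). -/
open Real

noncomputable section

namespace RealQuiver

variable {n : ℕ}

/-- Mutation of a real quiver (a skew-symmetric real matrix) at vertex `k`. -/
def mutate (B : Matrix (Fin n) (Fin n) ℝ) (k : Fin n) : Matrix (Fin n) (Fin n) ℝ :=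
  fun i j => if i = k ∨ j = k then -B i j
    else B i j + (|B i k| * B k j + B i k * |B k j|) / 2

/-- One mutation step. -/
def MutStep (B C : Matrix (Fin n) (Fin n) ℝ) : Prop := ∃ k, C = mutate B k

/-- `C` is obtained from `B` by a finite sequence of mutations. -/
def Reachable (B C : Matrix (Fin n) (Fin n) ℝ) : Prop :=
  Relation.ReflTransGen MutStep B C

/-- `B` is mutation-finite. -/
def MutationFinite (B : Matrix (Fin n) (Fin n) ℝ) : Prop :=
  {C | Reachable B C}.Finite

/-- Simultaneous permutation of the indices of `B`. -/
def permute (B : Matrix (Fin n) (Fin n) ℝ) (σ : Equiv.Perm (Fin n)) :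
    Matrix (Fin n) (Fin n) ℝ := fun i j => B (σ i) (σ j)

/-- Mutation-equivalence: a finite sequence of mutations followed by a
simultaneous permutation of the indices. -/
def MutEquiv (B C : Matrix (Fin n) (Fin n) ℝ) : Prop :=
  ∃ C' σ, Reachable B C' ∧ C = permute C' σ

/-- The underlying (undirected) graph of a quiver. -/
def toGraph (B : Matrix (Fin n) (Fin n) ℝ) : SimpleGraph (Fin n) where
  Adj i j := i ≠ j ∧ (B i j ≠ 0 ∨ B j i ≠ 0)
  symm := ⟨fun i j h => ⟨h.1.symm, h.2.symm⟩⟩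
  loopless := ⟨fun i h => h.1 rfl⟩

/-- Connectedness of a quiver. -/
def Connected (B : Matrix (Fin n) (Fin n) ℝ) : Prop := (toGraph B).Connected

def IsSkewSymmetric (B : Matrix (Fin n) (Fin n) ℝ) : Prop :=
  ∀ i j, B j i = -B i j

/-- A quiver is cyclic if its directed graph (an arrow `i → j` whenever
`B i j > 0`) contains a directed cycle. -/
def Cyclic (B : Matrix (Fin n) (Fin n) ℝ) : Prop :=
  ∃ i, Relation.TransGen (fun a b => 0 < B a b) i i

def Acyclic (B : Matrix (Fin n) (Fin n) ℝ) : Prop := ¬ Cyclic B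

/-- The rank-3 cyclic quiver `(a,b,c)`: `b₁₂ = a`, `b₂₃ = b`, `b₃₁ = c`. -/
def cyclicQ (a b c : ℝ) : Matrix (Fin 3) (Fin 3) ℝ :=
  !![0, a, -c; -a, 0, b; c, -b, 0]

/-- The rank-3 acyclic quiver `(a,b,-c)`: `b₁₂ = a`, `b₂₃ = b`, `b₁₃ = c`. -/
def acyclicQ (a b c : ℝ) : Matrix (Fin 3) (Fin 3) ℝ :=
  !![0, a, c; -a, 0, b; -c, -b, 0]

/-- `d` is the highest denominator of the mutation class of `B`. -/
def HighestDenom (B : Matrix (Fin n) (Fin n) ℝ) (d : ℕ) : Prop :=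
  (∀ C, MutEquiv B C → ∀ i j, i ≠ j →
    C i j = 0 ∨ ∃ p q : ℕ, 2 * p < q ∧ q ≤ d ∧ |C i j| = 2 * Real.cos (π * p / q)) ∧
  (∃ C, MutEquiv B C ∧ ∃ i j, ∃ p : ℕ, 0 < p ∧ 2 * p < d ∧ Nat.gcd p d = 1 ∧
    |C i j| = 2 * Real.cos (π * p / d))

/-- The rank-4 quiver `L n` (even denominator `d = 2n`):
`b₁₂ = b₂₃ = 2cos(π/2n)`, `b₃₁ = 2`, `b₁₄ = b₄₃ = 2cos(π(n-1)/2n)`, `b₂₄ = 0`. -/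
def Lq (n : ℕ) : Matrix (Fin 4) (Fin 4) ℝ :=
  !![0, 2 * Real.cos (π / (2 * n)), -2, 2 * Real.cos (π * ((n : ℝ) - 1) / (2 * n));
     -(2 * Real.cos (π / (2 * n))), 0, 2 * Real.cos (π / (2 * n)), 0;
     2, -(2 * Real.cos (π / (2 * n))), 0, -(2 * Real.cos (π * ((n : ℝ) - 1) / (2 * n)));
     -(2 * Real.cos (π * ((n : ℝ) - 1) / (2 * n))), 0, 2 * Real.cos (π * ((n : ℝ) - 1) / (2 * n)), 0]

/-- The rank-4 quiver `M n` (even denominator `d = 2n`):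
`b₁₂ = b₂₃ = 2cos(π/2n)`, `b₃₁ = 2`, `b₂₄ = 2cos(π(n-1)/2n)`, `b₁₄ = b₃₄ = 0`. -/
def Mq (n : ℕ) : Matrix (Fin 4) (Fin 4) ℝ :=
  !![0, 2 * Real.cos (π / (2 * n)), -2, 0;
     -(2 * Real.cos (π / (2 * n))), 0, 2 * Real.cos (π / (2 * n)), 2 * Real.cos (π * ((n : ℝ) - 1) / (2 * n));
     2, -(2 * Real.cos (π / (2 * n))), 0, 0;
     0, -(2 * Real.cos (π * ((n : ℝ) - 1) / (2 * n))), 0, 0]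

/-- The rank-4 quiver `O n` (odd denominator `d = 2n+1`):
`b₁₂ = b₂₃ = 2cos(π/d)`, `b₃₁ = 2`, `b₁₄ = b₂₄ = b₄₃ = 2cos(πn/d)`. -/
def Oq (n : ℕ) : Matrix (Fin 4) (Fin 4) ℝ :=
  !![0, 2 * Real.cos (π / (2 * n + 1)), -2, 2 * Real.cos (π * n / (2 * n + 1));
     -(2 * Real.cos (π / (2 * n + 1))), 0, 2 * Real.cos (π / (2 * n + 1)), 2 * Real.cos (π * n / (2 * n + 1));
     2, -(2 * Real.cos (π / (2 * n + 1))), 0, -(2 * Real.cos (π * n / (2 * n + 1)));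
     -(2 * Real.cos (π * n / (2 * n + 1))), -(2 * Real.cos (π * n / (2 * n + 1))), 2 * Real.cos (π * n / (2 * n + 1)), 0]

/-! Fix an edge `ij` of weight `t = |b_ij|` and let `k` be the third vertex. Mutations at `i`
and `j` act on `(u, v) = (b_ij b_ik, b_ij b_jk)` by the piecewise-linear maps `mutFst t` and
`mutSnd t`, so for a mutation-finite quiver the orbit of `(u, v)` under them is finite.
Let `ζ` and `ζ⁻¹ = t - ζ` be the roots of `X² - tX + 1`. Up to sign, each mutation either fixes
the complex chart `u + v'ζ` (where `v' = |v|` if `u > 0` and `v' = v` otherwise), or exchanges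
`ζ` with `ζ⁻¹` in it, possibly with a factor `ζ²`. A suitable word of at most six mutations then
multiplies the chart by `±ζ²`, so a finite orbit with `(u, v) ≠ 0` forces `ζ` to be a root of
unity, and `t = ζ + ζ⁻¹ = 2cos(πa/d)`. Connectedness guarantees `(u, v) ≠ 0`. -/

lemma exists_two_mul_le_cos_eq {a d : ℕ} (hd : 0 < d) (had : a ≤ 2 * d)
    (hcos : 0 ≤ cos (π * a / d)) : ∃ m : ℕ, 2 * m ≤ d ∧ cos (π * a / d) = cos (π * m / d) := by
  obtain ⟨m, hmd, hm⟩ : ∃ m : ℕ, m ≤ d ∧ cos (π * a / d) = cos (π * m / d) := by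
    rcases le_total a d with h | h
    · exact ⟨a, h, rfl⟩
    · refine ⟨2 * d - a, by omega, ?_⟩
      rw [← cos_two_pi_sub, Nat.cast_sub had]
      field_simp
      push_cast
      ring_nf
  refine ⟨m, ?_, hm⟩
  by_contra! hlt
  have hd' : (0 : ℝ) < d := by exact_mod_cast hd
  have h1 : π / 2 < π * m / d := by
    rw [lt_div_iff₀ hd']
    have : (d : ℝ) < 2 * m := by exact_mod_cast hlt
    nlinarith [pi_pos]
  have h2 : π * m / d < π + π / 2 := by
    rw [div_lt_iff₀ hd']
    have : (m : ℝ) ≤ d := by exact_mod_cast hmd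
    nlinarith [pi_pos]
  exact (cos_neg_of_pi_div_two_lt_of_lt h1 h2).not_ge (hm ▸ hcos)

lemma exists_eq_two_cos_of_pow_eq_one {t : ℝ} {ζ : ℂ} {N : ℕ} (hζ : ζ * (t - ζ) = 1) (hN : 0 < N)
    (hζN : ζ ^ N = 1) : ∃ i < N, t = 2 * cos (π * (2 * i : ℕ) / N) := by
  have : NeZero N := ⟨hN.ne'⟩
  obtain ⟨i, hi, rfl⟩ := (Complex.isPrimitiveRoot_exp N hN.ne').eq_pow_of_pow_eq_one hζN
  refine ⟨i, hi, ?_⟩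
  set θ : ℝ := π * (2 * i : ℕ) / N
  have hexp : Complex.exp (2 * π * Complex.I / N) ^ i = Complex.exp (θ * Complex.I) := by
    rw [← Complex.exp_nat_mul]
    push_cast [θ]
    ring_nf
  rw [hexp] at hζ
  have hinv : (t : ℂ) - Complex.exp (θ * Complex.I) = Complex.exp (-θ * Complex.I) := by
    rw [← inv_eq_of_mul_eq_one_right hζ, ← Complex.exp_neg, neg_mul]
  have : (t : ℂ) = 2 * Complex.cos θ := by
    rw [Complex.two_cos, ← hinv]
    ring
  exact_mod_cast this

lemma mul_sub_eq_one_symm {t : ℝ} {ζ : ℂ} (hζ : ζ * (t - ζ) = 1) : (t - ζ) * (t - (t - ζ)) = 1 := by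
  rw [sub_sub_cancel, mul_comm, hζ]

def mutFst (t : ℝ) (s : ℝ × ℝ) : ℝ × ℝ := (s.1, -s.2 - t * min s.1 0)

def mutSnd (t : ℝ) (s : ℝ × ℝ) : ℝ × ℝ := (-s.1 - t * max s.2 0, s.2)

def orbit (t : ℝ) (s : ℝ × ℝ) : Set (ℝ × ℝ) :=
  {s' | Relation.ReflTransGen (fun a b => b = mutFst t a ∨ b = mutSnd t a) s s'}

def chart (ζ : ℂ) (s : ℝ × ℝ) : ℂ :=
  s.1 + (if 0 < s.1 then |s.2| else s.2 : ℝ) * ζ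

section Dynamics

variable {t : ℝ} {s s' : ℝ × ℝ} {ζ : ℂ}

lemma mutFst_mem_orbit (h : s' ∈ orbit t s) : mutFst t s' ∈ orbit t s :=
  .tail h (.inl rfl)

lemma mutSnd_mem_orbit (h : s' ∈ orbit t s) : mutSnd t s' ∈ orbit t s :=
  .tail h (.inr rfl)

lemma mem_orbit_self : s ∈ orbit t s := .refl

lemma orbit_subset (h : s' ∈ orbit t s) : orbit t s' ⊆ orbit t s :=
  fun _ h' => Relation.ReflTransGen.trans h h'

lemma mutFst_of_nonneg (h : 0 ≤ s.1) : mutFst t s = (s.1, -s.2) := by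
  simp [mutFst, min_eq_right h]

lemma mutSnd_of_nonpos (h : s.2 ≤ 0) : mutSnd t s = (-s.1, s.2) := by
  simp [mutSnd, max_eq_right h]

lemma chart_mutFst_sq_of_nonpos (hζ : ζ * (t - ζ) = 1) (h : s.1 ≤ 0) :
    chart ζ (mutFst t s) ^ 2 = ζ ^ 4 * chart (t - ζ) s ^ 2 := by
  have : chart ζ (mutFst t s) = -ζ ^ 2 * chart (t - ζ) s := by
    obtain ⟨u, v⟩ := s
    simp only [chart, mutFst, min_eq_left h, if_neg (not_lt.2 h)]
    push_cast
    linear_combination (v * ζ - u) * hζ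
  rw [this]
  ring

lemma chart_mutFst_sq_of_nonneg (h : 0 ≤ s.1) : chart ζ (mutFst t s) ^ 2 = chart ζ s ^ 2 := by
  obtain ⟨u, v⟩ := s
  rw [mutFst_of_nonneg h]
  rcases h.lt_or_eq with hu | rfl
  · simp [chart, hu]
  · simp [chart]

lemma chart_mutSnd_sq_of_nonneg (h : 0 ≤ s.2) :
    chart ζ (mutSnd t s) ^ 2 = chart (t - ζ) s ^ 2 := by
  have : chart ζ (mutSnd t s) = -chart (t - ζ) s := by
    obtain ⟨u, v⟩ := s
    simp only [chart, mutSnd, max_eq_left h, abs_of_nonneg h, ite_self]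
    push_cast
    ring
  rw [this, neg_sq]

lemma chart_mutSnd_sq_of_nonpos (h : s.2 ≤ 0) : chart ζ (mutSnd t s) ^ 2 = chart ζ s ^ 2 := by
  obtain ⟨u, v⟩ := s
  rw [mutSnd_of_nonpos h]
  rcases lt_trichotomy u 0 with hu | rfl | hu
  · simp only [chart, Complex.ofReal_neg, Left.neg_pos_iff, hu, not_lt.2 hu.le, if_true, if_false,
      abs_of_nonpos h]
    ring
  · simp [chart]
  · simp only [chart, Complex.ofReal_neg, Left.neg_pos_iff, hu, not_lt.2 hu.le, if_true, if_false,
      abs_of_nonpos h]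
    ring

lemma exists_mem_orbit_chart_sq_eq_swap (s : ℝ × ℝ) :
    ∃ s' ∈ orbit t s, ∀ ζ : ℂ, ζ * (t - ζ) = 1 → chart ζ s' ^ 2 = chart (t - ζ) s ^ 2 := by
  rcases le_or_gt 0 s.2 with hv | hv
  · exact ⟨mutSnd t s, mutSnd_mem_orbit mem_orbit_self,
      fun ζ _ => chart_mutSnd_sq_of_nonneg hv⟩
  rcases le_or_gt s.1 0 with hu | hu
  · have hs₁ : mutSnd t s = (-s.1, s.2) := mutSnd_of_nonpos hv.le
    have hs₂ : mutFst t (mutSnd t s) = (-s.1, -s.2) := by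
      rw [hs₁, mutFst_of_nonneg (by simpa using hu)]
    refine ⟨mutSnd t (mutFst t (mutSnd t s)),
      mutSnd_mem_orbit (mutFst_mem_orbit (mutSnd_mem_orbit mem_orbit_self)), fun ζ _ => ?_⟩
    rw [chart_mutSnd_sq_of_nonneg (by rw [hs₂]; simpa using hv.le),
      chart_mutFst_sq_of_nonneg (by rw [hs₁]; simpa using hu), chart_mutSnd_sq_of_nonpos hv.le]
  · have hs₁ : mutFst t s = (s.1, -s.2) := mutFst_of_nonneg hu.le
    refine ⟨mutSnd t (mutFst t s), mutSnd_mem_orbit (mutFst_mem_orbit mem_orbit_self),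
      fun ζ _ => ?_⟩
    rw [chart_mutSnd_sq_of_nonneg (by rw [hs₁]; simpa using hv.le),
      chart_mutFst_sq_of_nonneg hu.le]

lemma exists_mem_orbit_chart_sq_eq_mul_swap (s : ℝ × ℝ) :
    ∃ s' ∈ orbit t s, ∀ ζ : ℂ, ζ * (t - ζ) = 1 →
      chart ζ s' ^ 2 = ζ ^ 4 * chart (t - ζ) s ^ 2 := by
  rcases le_or_gt s.1 0 with hu | hu
  · exact ⟨mutFst t s, mutFst_mem_orbit mem_orbit_self,
      fun ζ hζ => chart_mutFst_sq_of_nonpos hζ hu⟩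
  rcases le_or_gt s.2 0 with hv | hv
  · have hs₁ : mutSnd t s = (-s.1, s.2) := mutSnd_of_nonpos hv
    refine ⟨mutFst t (mutSnd t s), mutFst_mem_orbit (mutSnd_mem_orbit mem_orbit_self),
      fun ζ hζ => ?_⟩
    rw [chart_mutFst_sq_of_nonpos hζ (by rw [hs₁]; simpa using hu.le),
      chart_mutSnd_sq_of_nonpos hv]
  · have hs₁ : mutFst t s = (s.1, -s.2) := mutFst_of_nonneg hu.le
    have hs₂ : mutSnd t (mutFst t s) = (-s.1, -s.2) := by
      rw [hs₁, mutSnd_of_nonpos (by simpa using hv.le)]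
    refine ⟨mutFst t (mutSnd t (mutFst t s)),
      mutFst_mem_orbit (mutSnd_mem_orbit (mutFst_mem_orbit mem_orbit_self)), fun ζ hζ => ?_⟩
    rw [chart_mutFst_sq_of_nonpos hζ (by rw [hs₂]; simpa using hu.le),
      chart_mutSnd_sq_of_nonpos (by rw [hs₁]; simpa using hv.le), chart_mutFst_sq_of_nonneg hu.le]

lemma exists_mem_orbit_chart_sq_eq_pow_mul (s : ℝ × ℝ) (m : ℕ) :
    ∃ s' ∈ orbit t s, ∀ ζ : ℂ, ζ * (t - ζ) = 1 →
      chart ζ s' ^ 2 = ζ ^ (4 * m) * chart ζ s ^ 2 := by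
  induction m with
  | zero => exact ⟨s, mem_orbit_self, fun ζ _ => by simp⟩
  | succ m ih =>
    obtain ⟨s₁, hs₁, h₁⟩ := ih
    obtain ⟨s₂, hs₂, h₂⟩ := exists_mem_orbit_chart_sq_eq_swap (t := t) s₁
    obtain ⟨s₃, hs₃, h₃⟩ := exists_mem_orbit_chart_sq_eq_mul_swap (t := t) s₂
    refine ⟨s₃, orbit_subset hs₁ (orbit_subset hs₂ hs₃), fun ζ hζ => ?_⟩
    rw [h₃ ζ hζ, h₂ _ (mul_sub_eq_one_symm hζ), sub_sub_cancel, h₁ ζ hζ]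
    ring

lemma exists_pow_eq_one_of_finite_orbit (hfin : (orbit t s).Finite) (hζ : ζ * (t - ζ) = 1)
    (hs : chart ζ s ≠ 0) : ∃ N, 0 < N ∧ ζ ^ N = 1 := by
  choose g hg hgζ using exists_mem_orbit_chart_sq_eq_pow_mul (t := t) s
  obtain ⟨a, b, hab, hgab⟩ := Set.Finite.exists_lt_map_eq_of_forall_mem hg hfin
  have key : ζ ^ (4 * a) * chart ζ s ^ 2 * ζ ^ (4 * (b - a)) = ζ ^ (4 * a) * chart ζ s ^ 2 := by
    rw [mul_right_comm, ← pow_add, show 4 * a + 4 * (b - a) = 4 * b by omega, ← hgζ b ζ hζ,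
      ← hgab, hgζ a ζ hζ]
  have hne : ζ ^ (4 * a) * chart ζ s ^ 2 ≠ 0 :=
    mul_ne_zero (pow_ne_zero _ (left_ne_zero_of_mul_eq_one hζ)) (pow_ne_zero _ hs)
  exact ⟨4 * (b - a), by omega, (mul_eq_left₀ hne).1 key⟩

lemma eq_zero_of_chart_eq_zero {η : ℂ} (hne : ζ ≠ η) (hζ : chart ζ s = 0)
    (hη : chart η s = 0) : s = 0 := by
  simp only [chart] at hζ hη
  set w : ℝ := if 0 < s.1 then |s.2| else s.2 with hw
  have hw0 : w = 0 := by
    have : (w : ℂ) * (ζ - η) = 0 := by linear_combination hζ - hη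
    exact_mod_cast (mul_eq_zero.1 this).resolve_right (sub_ne_zero.2 hne)
  have hu : s.1 = 0 := by
    have : (s.1 : ℂ) = 0 := by simpa [hw0] using hζ
    exact_mod_cast this
  have hv : s.2 = 0 := by simpa [hw, hu] using hw0
  exact Prod.ext hu hv

theorem exists_eq_two_cos_of_finite_orbit (ht : 0 ≤ t) (hfin : (orbit t s).Finite)
    (hs : s ≠ 0) : ∃ d m : ℕ, 1 ≤ d ∧ 2 * m ≤ d ∧ t = 2 * cos (π * m / d) := by
  rcases eq_or_ne t 2 with rfl | ht2
  · exact ⟨1, 0, le_rfl, zero_le_one, by simp⟩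
  obtain ⟨r, hr⟩ := IsAlgClosed.exists_pow_nat_eq ((t : ℂ) ^ 2 - 4) two_pos
  have hζ : (t + r) / 2 * (t - (t + r) / 2) = 1 := by linear_combination (-1 / 4 : ℂ) * hr
  have hne : (t + r) / 2 ≠ t - (t + r) / 2 := by
    intro h
    have hr0 : r = 0 := by linear_combination h
    have ht2' : (t : ℂ) ^ 2 = 2 ^ 2 := by linear_combination -hr + r * hr0
    have : t ^ 2 = 2 ^ 2 := by exact_mod_cast ht2'
    exact ht2 ((pow_left_inj₀ ht zero_le_two two_ne_zero).1 this)
  obtain ⟨ζ, hζ, hsζ⟩ : ∃ ζ : ℂ, ζ * (t - ζ) = 1 ∧ chart ζ s ≠ 0 := by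
    by_contra! h
    exact hs (eq_zero_of_chart_eq_zero hne (h _ hζ) (h _ (mul_sub_eq_one_symm hζ)))
  obtain ⟨N, hN, hζN⟩ := exists_pow_eq_one_of_finite_orbit hfin hζ hsζ
  obtain ⟨i, hi, rfl⟩ := exists_eq_two_cos_of_pow_eq_one hζ hN hζN
  obtain ⟨m, hm, hcos⟩ := exists_two_mul_le_cos_eq (a := 2 * i) hN (by omega) (by linarith)
  exact ⟨N, m, hN, hm, by rw [hcos]⟩

end Dynamics

lemma min_zero_eq_half_sub_abs (a : ℝ) : min a 0 = (a - |a|) / 2 := by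
  rcases le_total a 0 with h | h
  · rw [min_eq_left h, abs_of_nonpos h]; ring
  · rw [min_eq_right h, abs_of_nonneg h]; ring

lemma max_zero_eq_half_add_abs (a : ℝ) : max a 0 = (a + |a|) / 2 := by
  rcases le_total a 0 with h | h
  · rw [max_eq_right h, abs_of_nonpos h]; ring
  · rw [max_eq_left h, abs_of_nonneg h]; ring

section Mutation

variable {B : Matrix (Fin n) (Fin n) ℝ} {i j k : Fin n}

lemma mutate_apply_left : mutate B k k j = -B k j := by
  simp [mutate]

lemma mutate_apply_right : mutate B k i k = -B i k := by
  simp [mutate]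

lemma mutate_apply_of_ne (hi : i ≠ k) (hj : j ≠ k) :
    mutate B k i j = B i j + (|B i k| * B k j + B i k * |B k j|) / 2 := by
  simp [mutate, hi, hj]

lemma IsSkewSymmetric.mutate (h : IsSkewSymmetric B) (k : Fin n) :
    IsSkewSymmetric (mutate B k) := by
  intro a b
  by_cases hab : a = k ∨ b = k
  · simp only [RealQuiver.mutate, if_pos hab, if_pos hab.symm, h a b]
  · obtain ⟨ha, hb⟩ := not_or.1 hab
    rw [mutate_apply_of_ne hb ha, mutate_apply_of_ne ha hb, h a b, h k b, h a k,
      abs_neg, abs_neg]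
    ring

def foldedCoords (i j k : Fin n) (B : Matrix (Fin n) (Fin n) ℝ) : ℝ × ℝ :=
  (B i j * B i k, B i j * B j k)

lemma foldedCoords_mutate_fst (hskew : IsSkewSymmetric B) (hij : i ≠ j) (hik : i ≠ k) :
    foldedCoords i j k (mutate B i) = mutFst |B i j| (foldedCoords i j k B) := by
  simp only [foldedCoords, mutFst, mutate_apply_left, mutate_apply_of_ne hij.symm hik.symm,
    hskew i j, abs_neg, min_zero_eq_half_sub_abs, abs_mul]
  ext
  · ring
  · simp only
    linear_combination (-|B i k| / 2) * abs_mul_abs_self (B i j)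

lemma foldedCoords_mutate_snd (hij : i ≠ j) (hjk : j ≠ k) :
    foldedCoords i j k (mutate B j) = mutSnd |B i j| (foldedCoords i j k B) := by
  simp only [foldedCoords, mutSnd, mutate_apply_right, mutate_apply_left,
    mutate_apply_of_ne hij hjk.symm, max_zero_eq_half_add_abs, abs_mul]
  ext
  · simp only
    linear_combination (|B j k| / 2) * abs_mul_abs_self (B i j)
  · ring

lemma orbit_foldedCoords_subset (hskew : IsSkewSymmetric B) (hij : i ≠ j) (hik : i ≠ k)
    (hjk : j ≠ k) :
    orbit |B i j| (foldedCoords i j k B) ⊆ foldedCoords i j k '' {C | Reachable B C} := by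
  suffices ∀ s ∈ orbit |B i j| (foldedCoords i j k B), ∃ C, Reachable B C ∧
      IsSkewSymmetric C ∧ |C i j| = |B i j| ∧ foldedCoords i j k C = s by
    intro s hs
    obtain ⟨C, hC, -, -, rfl⟩ := this s hs
    exact ⟨C, hC, rfl⟩
  intro s hs
  induction hs with
  | refl => exact ⟨B, .refl, hskew, rfl, rfl⟩
  | tail _ hstep ih =>
    obtain ⟨C, hC, hCskew, hCij, rfl⟩ := ih
    rcases hstep with rfl | rfl
    · refine ⟨mutate C i, hC.tail ⟨i, rfl⟩, hCskew.mutate i, ?_, ?_⟩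
      · rw [mutate_apply_left, abs_neg, hCij]
      · rw [← hCij, foldedCoords_mutate_fst hCskew hij hik]
    · refine ⟨mutate C j, hC.tail ⟨j, rfl⟩, hCskew.mutate j, ?_, ?_⟩
      · rw [mutate_apply_right, abs_neg, hCij]
      · rw [← hCij, foldedCoords_mutate_snd hij hjk]

lemma foldedCoords_ne_zero (hij : B i j ≠ 0) (h : B i k ≠ 0 ∨ B j k ≠ 0) :
    foldedCoords i j k B ≠ 0 := by
  simpa [foldedCoords, Prod.ext_iff, hij, or_iff_not_imp_left] using h

lemma exists_ne_apply_ne_zero_of_connected [Nontrivial (Fin n)] (hskew : IsSkewSymmetric B)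
    (hconn : Connected B) (k : Fin n) : ∃ w ≠ k, B w k ≠ 0 := by
  obtain ⟨w, hkw, hw⟩ := hconn.preconnected.exists_adj_of_nontrivial k
  refine ⟨w, Ne.symm hkw, ?_⟩
  rcases hw with h | h
  · rwa [hskew k w, neg_ne_zero]
  · exact h

end Mutation

/-- Every weight of a connected mutation-finite rank-3 real quiver is of the form
`2cos(πm/d)` with `d ≥ 1` and `0 ≤ m ≤ d/2`. -/
theorem rank3_weights (B : Matrix (Fin 3) (Fin 3) ℝ)
    (hskew : IsSkewSymmetric B) (hconn : Connected B) (hfin : MutationFinite B) :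
    ∀ i j : Fin 3, i ≠ j → ∃ d m : ℕ, 1 ≤ d ∧ 2 * m ≤ d ∧
      |B i j| = 2 * Real.cos (π * m / d) := by
  intro i j hij
  obtain ⟨k, hik, hjk, hk⟩ : ∃ k, i ≠ k ∧ j ≠ k ∧ ∀ w, w ≠ k → w = i ∨ w = j := by
    revert i j
    decide
  rcases (abs_nonneg (B i j)).eq_or_lt with h0 | h0
  · exact ⟨2, 1, by norm_num, le_rfl, by simp [← h0]⟩
  have hk_adj : B i k ≠ 0 ∨ B j k ≠ 0 := by
    obtain ⟨w, hwk, hw⟩ := exists_ne_apply_ne_zero_of_connected hskew hconn k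
    rcases hk w hwk with rfl | rfl
    exacts [.inl hw, .inr hw]
  exact exists_eq_two_cos_of_finite_orbit (abs_nonneg _)
    ((hfin.image _).subset (orbit_foldedCoords_subset hskew hij hik hjk))
    (foldedCoords_ne_zero (abs_pos.1 h0) hk_adj)

end RealQuiver
end
end

section
/- Let B be a connected mutation-finite real quiver of rank 3 that contains an arrow of weight 2 (i.e. |b_ij| = 2 for some i,j). Then B is a cyclic quiver, and up to simultaneous permutation of the indices B equals either (2,2,2) or (2, 2cos(πm/d), 2cos(πm/d)) for some integers d ≥ 1 and 0 < m ≤ d/2. -/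
/-!
Permuting vertices, the weight-2 arrow joins vertices `1` and `2`, so `B = cyclicQ x 2 y`.
For `cyclicQ x t y` with `t > 0`, a mutation at `1` or `2` followed by a relabelling replaces
the pair `(x, y)` by `(y, t y - x)`, up to a global sign; hence the mutation class contains
(up to sign and relabelling) the consecutive pairs of the sequence `vₖ₊₂ = t vₖ₊₁ - vₖ`.
Finiteness of the class forces `|vₖ|` to vanish or to repeat.

For `t = 2` the sequence is arithmetic, which rules out everything except `x = y > 0`: so `B`
is the cyclic quiver `(x, 2, x)`. Rotating it to `(2, x, x)` and now taking `x` as the fixed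
weight, the sequence starting from `(2, x)` is `2 cos (k θ)` with `2 cos θ = x` when `x < 2`,
and strictly increasing when `x > 2`. A repetition `|cos (k θ)| = |cos (l θ)|` makes `θ` a
rational multiple of `π`.
-/

open Real

noncomputable section

namespace RealQuiver

variable {n : ℕ}

lemma mutate_neg (B : Matrix (Fin n) (Fin n) ℝ) (k : Fin n) :
    mutate (-B) k = -mutate B k := by
  funext i j
  simp only [mutate, Matrix.neg_apply, abs_neg]
  split <;> ring

lemma mutate_permute (B : Matrix (Fin n) (Fin n) ℝ) (σ : Equiv.Perm (Fin n)) (k : Fin n) :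
    mutate (permute B σ) k = permute (mutate B (σ k)) σ := by
  funext i j
  simp only [mutate, permute, σ.injective.eq_iff]

lemma permute_neg (B : Matrix (Fin n) (Fin n) ℝ) (σ : Equiv.Perm (Fin n)) :
    permute (-B) σ = -permute B σ := rfl

lemma permute_permute (B : Matrix (Fin n) (Fin n) ℝ) (σ τ : Equiv.Perm (Fin n)) :
    permute (permute B σ) τ = permute B (σ * τ) := rfl

lemma isSkewSymmetric_permute {B : Matrix (Fin n) (Fin n) ℝ} (hB : IsSkewSymmetric B)
    (σ : Equiv.Perm (Fin n)) : IsSkewSymmetric (permute B σ) :=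
  fun i j => hB (σ i) (σ j)

lemma Cyclic.of_permute {B : Matrix (Fin n) (Fin n) ℝ} {σ : Equiv.Perm (Fin n)}
    (h : Cyclic (permute B σ)) : Cyclic B := by
  obtain ⟨i, hi⟩ := h
  exact ⟨σ i, Relation.TransGen.lift σ (fun _ _ hab => hab) i i hi⟩

lemma Connected.permute {B : Matrix (Fin n) (Fin n) ℝ} (h : Connected B)
    (σ : Equiv.Perm (Fin n)) : Connected (RealQuiver.permute B σ) :=
  (SimpleGraph.Iso.connected_iff (G := toGraph (RealQuiver.permute B σ)) (H := toGraph B)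
    ⟨σ, by simp [toGraph, RealQuiver.permute]⟩).mpr h

lemma MutEquiv.refl (B : Matrix (Fin n) (Fin n) ℝ) : MutEquiv B B :=
  ⟨B, 1, .refl, rfl⟩

lemma MutEquiv.permute {B C : Matrix (Fin n) (Fin n) ℝ} (h : MutEquiv B C)
    (τ : Equiv.Perm (Fin n)) : MutEquiv B (RealQuiver.permute C τ) := by
  obtain ⟨C', σ, hC', rfl⟩ := h
  exact ⟨C', σ * τ, hC', rfl⟩

lemma MutEquiv.mutate {B C : Matrix (Fin n) (Fin n) ℝ} (h : MutEquiv B C) (k : Fin n) :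
    MutEquiv B (RealQuiver.mutate C k) := by
  obtain ⟨C', σ, hC', rfl⟩ := h
  exact ⟨_, σ, hC'.tail ⟨σ k, rfl⟩, mutate_permute C' σ k⟩

/-- Mutations of `cyclicQ` land on `-cyclicQ`; as mutation commutes with `C ↦ -C`, we work up
to sign. -/
def SignedMutEquiv (B C : Matrix (Fin n) (Fin n) ℝ) : Prop :=
  MutEquiv B C ∨ MutEquiv B (-C)

namespace SignedMutEquiv

variable {B C : Matrix (Fin n) (Fin n) ℝ}

lemma refl (B : Matrix (Fin n) (Fin n) ℝ) : SignedMutEquiv B B := .inl (.refl B)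

lemma neg (h : SignedMutEquiv B C) : SignedMutEquiv B (-C) := by
  rw [SignedMutEquiv, neg_neg]
  exact h.symm

lemma permute (h : SignedMutEquiv B C) (τ : Equiv.Perm (Fin n)) :
    SignedMutEquiv B (RealQuiver.permute C τ) := by
  rcases h with h | h
  · exact .inl (h.permute τ)
  · exact .inr (permute_neg C τ ▸ h.permute τ)

lemma mutate (h : SignedMutEquiv B C) (k : Fin n) :
    SignedMutEquiv B (RealQuiver.mutate C k) := by
  rcases h with h | h
  · exact .inl (h.mutate k)
  · exact .inr (mutate_neg C k ▸ h.mutate k)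

end SignedMutEquiv

lemma MutationFinite.finite_setOf_signedMutEquiv {B : Matrix (Fin n) (Fin n) ℝ}
    (hB : MutationFinite B) : {C | SignedMutEquiv B C}.Finite := by
  have hM : {C | MutEquiv B C}.Finite := by
    refine (hB.image2 (fun C σ => permute C σ) Set.finite_univ).subset ?_
    rintro _ ⟨C, σ, hC, rfl⟩
    exact ⟨C, hC, σ, trivial, rfl⟩
  refine (hM.union (hM.image Neg.neg)).subset ?_
  rintro C (hC | hC)
  · exact .inl hC
  · exact .inr ⟨-C, hC, neg_neg C⟩

lemma eq_cyclicQ_of_isSkewSymmetric {B : Matrix (Fin 3) (Fin 3) ℝ} (hB : IsSkewSymmetric B) :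
    B = cyclicQ (B 0 1) (B 1 2) (B 2 0) := by
  have hdiag : ∀ i, B i i = 0 := fun i => by linarith [hB i i]
  ext i j
  fin_cases i <;> fin_cases j <;> simp [cyclicQ, hdiag, hB 0, hB 1 2]

lemma exists_permute_eq_cyclicQ_two {B : Matrix (Fin 3) (Fin 3) ℝ} (hB : IsSkewSymmetric B)
    (h : ∃ i j, |B i j| = 2) : ∃ σ x y, permute B σ = cyclicQ x 2 y := by
  have hdiag : ∀ i, B i i = 0 := fun i => by linarith [hB i i]
  obtain ⟨p, q, hpq⟩ : ∃ p q, B p q = 2 := by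
    obtain ⟨i, j, hij⟩ := h
    rcases (abs_eq zero_le_two).mp hij with h | h
    · exact ⟨i, j, h⟩
    · exact ⟨j, i, by rw [hB, h, neg_neg]⟩
  have hperm : ∀ p q : Fin 3, p ≠ q → ∃ σ : Equiv.Perm (Fin 3), σ 1 = p ∧ σ 2 = q := by decide
  obtain ⟨σ, rfl, rfl⟩ := hperm p q fun h => by simp [h, hdiag] at hpq
  have hσ := eq_cyclicQ_of_isSkewSymmetric (isSkewSymmetric_permute hB σ)
  rw [show permute B σ 1 2 = 2 from hpq] at hσ
  exact ⟨σ, _, _, hσ⟩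

lemma ne_zero_or_ne_zero_of_connected_cyclicQ {x t y : ℝ} (h : Connected (cyclicQ x t y)) :
    x ≠ 0 ∨ y ≠ 0 := by
  obtain ⟨j, -, hj⟩ := h.preconnected.exists_adj_of_nontrivial 0
  by_contra! hxy
  fin_cases j <;> simp [cyclicQ, hxy] at hj

lemma cyclic_cyclicQ {a b c : ℝ} (ha : 0 < a) (hb : 0 < b) (hc : 0 < c) :
    Cyclic (cyclicQ a b c) := by
  refine ⟨0, .tail (.tail (.single (b := 1) ?_) (c := 2) ?_) ?_⟩ <;>
    simpa [cyclicQ]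

lemma permute_cyclicQ_finRotate (a b c : ℝ) :
    permute (cyclicQ a b c) (finRotate 3) = cyclicQ b c a := by
  ext i j
  fin_cases i <;> fin_cases j <;> rfl

lemma permute_cyclicQ_swap (x t y : ℝ) :
    permute (cyclicQ x t y) (Equiv.swap 1 2) = -cyclicQ y t x := by
  ext i j
  fin_cases i <;> fin_cases j <;> simp [permute, cyclicQ, Equiv.swap_apply_of_ne_of_ne]

lemma mutate_cyclicQ_zero {x y : ℝ} (t : ℝ) (hxy : x * y ≤ 0) :
    mutate (cyclicQ x t y) 0 = cyclicQ (-x) t (-y) := by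
  have h : |x| * y + x * |y| = 0 := by
    rcases abs_cases x with ⟨hx, hx'⟩ | ⟨hx, hx'⟩ <;>
      rcases abs_cases y with ⟨hy, hy'⟩ | ⟨hy, hy'⟩ <;> nlinarith
  ext i j
  fin_cases i <;> fin_cases j <;> simp [mutate, cyclicQ] <;> linarith

lemma mutate_cyclicQ_one {x t : ℝ} (y : ℝ) (hx : x ≤ 0) (ht : 0 ≤ t) :
    mutate (cyclicQ x t y) 1 = -cyclicQ x t (-y) := by
  ext i j
  fin_cases i <;> fin_cases j <;> simp [mutate, cyclicQ, abs_of_nonpos hx, abs_of_nonneg ht]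

lemma mutate_cyclicQ_two {t y : ℝ} (x : ℝ) (ht : 0 < t) (hy : 0 < y) :
    mutate (cyclicQ x t y) 2 = -cyclicQ (t * y - x) t y := by
  ext i j
  fin_cases i <;> fin_cases j <;> simp [mutate, cyclicQ, abs_of_pos ht, abs_of_pos hy] <;> ring

namespace SignedMutEquiv

variable {B : Matrix (Fin 3) (Fin 3) ℝ} {x t y : ℝ}

lemma cyclicQ_swap (h : SignedMutEquiv B (cyclicQ x t y)) :
    SignedMutEquiv B (cyclicQ y t x) := by
  simpa only [permute_cyclicQ_swap, neg_neg] using (h.permute (Equiv.swap 1 2)).neg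

lemma cyclicQ_neg (h : SignedMutEquiv B (cyclicQ x t y)) (hxy : x * y ≤ 0) :
    SignedMutEquiv B (cyclicQ (-x) t (-y)) :=
  mutate_cyclicQ_zero t hxy ▸ h.mutate 0

lemma cyclicQ_neg_right (h : SignedMutEquiv B (cyclicQ x t y)) (hx : x ≤ 0) (ht : 0 ≤ t) :
    SignedMutEquiv B (cyclicQ x t (-y)) := by
  simpa only [mutate_cyclicQ_one y hx ht, neg_neg] using (h.mutate 1).neg

lemma cyclicQ_step (h : SignedMutEquiv B (cyclicQ x t y)) (ht : 0 < t) (hy : 0 < y) :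
    SignedMutEquiv B (cyclicQ y t (t * y - x)) := by
  have h' := (h.mutate 2).neg
  rw [mutate_cyclicQ_two x ht hy, neg_neg] at h'
  exact h'.cyclicQ_swap

end SignedMutEquiv

/-- The sequence `v₀ = x`, `v₁ = y`, `vₖ₊₂ = t vₖ₊₁ - vₖ`; mutations of `cyclicQ x t y` at the
vertices `1` and `2` walk along consecutive pairs of it. -/
def chebSeq (t x y : ℝ) : ℕ → ℝ
  | 0 => x
  | 1 => y
  | k + 2 => t * chebSeq t x y (k + 1) - chebSeq t x y k

section ChebSeq

variable {t x y : ℝ}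

lemma chebSeq_add_two (k : ℕ) :
    chebSeq t x y (k + 2) = t * chebSeq t x y (k + 1) - chebSeq t x y k := rfl

lemma chebSeq_two_eq (k : ℕ) : chebSeq 2 x y k = x + k * (y - x) := by
  induction k using Nat.strong_induction_on with
  | _ k ih =>
    match k with
    | 0 => simp [chebSeq]
    | 1 => simp [chebSeq]
    | k + 2 =>
      rw [chebSeq_add_two, ih k (by omega), ih (k + 1) (by omega)]
      push_cast
      ring

lemma chebSeq_eq_two_mul_cos (ht0 : 0 < t) (ht2 : t < 2) (k : ℕ) :
    chebSeq t 2 t k = 2 * cos (k * arccos (t / 2)) := by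
  have hc : cos (arccos (t / 2)) = t / 2 := cos_arccos (by linarith) (by linarith)
  induction k using Nat.strong_induction_on with
  | _ k ih =>
    match k with
    | 0 => simp [chebSeq]
    | 1 => simp [chebSeq, hc]; ring
    | k + 2 =>
      rw [chebSeq_add_two, ih k (by omega), ih (k + 1) (by omega)]
      set θ := arccos (t / 2)
      have e2 : ((k + 2 : ℕ) : ℝ) * θ = (k + 1 : ℕ) * θ + θ := by push_cast; ring
      have e0 : (k : ℝ) * θ = (k + 1 : ℕ) * θ - θ := by push_cast; ring
      rw [e2, e0, cos_add, cos_sub, hc]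
      ring

lemma strictMono_chebSeq_of_two_lt (ht : 2 < t) : StrictMono (chebSeq t 2 t) := by
  have h : ∀ k, 2 ≤ chebSeq t 2 t k ∧ chebSeq t 2 t k < chebSeq t 2 t (k + 1) := by
    intro k
    induction k with
    | zero => exact ⟨le_rfl, ht⟩
    | succ k ih =>
      rw [chebSeq_add_two]
      constructor <;> nlinarith [ih.1, ih.2]
  exact strictMono_nat_of_lt_succ fun k => (h k).2

end ChebSeq

section Orbit

variable {B : Matrix (Fin 3) (Fin 3) ℝ} {t x y : ℝ}

lemma SignedMutEquiv.exists_sign_chebSeq (h : SignedMutEquiv B (cyclicQ x t y)) (ht : 0 < t)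
    (hy : 0 < y) (hv : ∀ k, chebSeq t x y (k + 1) ≠ 0) (k : ℕ) :
    ∃ ε : ℝ, |ε| = 1 ∧ 0 < ε * chebSeq t x y (k + 1) ∧
      SignedMutEquiv B (cyclicQ (ε * chebSeq t x y (k + 1)) t (ε * chebSeq t x y (k + 2))) := by
  induction k with
  | zero => exact ⟨1, abs_one, by simpa [chebSeq], by simpa [chebSeq] using h.cyclicQ_step ht hy⟩
  | succ k ih =>
    obtain ⟨ε, hε, hpos, hk⟩ := ih
    have hrec := chebSeq_add_two (t := t) (x := x) (y := y) (k + 1)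
    have hε0 : ε ≠ 0 := by rintro rfl; simp at hε
    rcases (mul_ne_zero hε0 (hv (k + 1))).lt_or_gt with hneg | hpos'
    · refine ⟨-ε, by rwa [abs_neg], by linarith, ?_⟩
      convert (hk.cyclicQ_neg (by nlinarith)).cyclicQ_step ht (by linarith) using 2
      · ring
      · rw [hrec]
        ring
    · refine ⟨ε, hε, hpos', ?_⟩
      convert hk.cyclicQ_step ht hpos' using 2
      rw [hrec]
      ring

lemma MutationFinite.chebSeq_eq_zero_or_abs_eq (hB : MutationFinite B)
    (h : SignedMutEquiv B (cyclicQ x t y)) (ht : 0 < t) (hy : 0 < y) :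
    (∃ k, chebSeq t x y (k + 1) = 0) ∨
      ∃ k l, k < l ∧ |chebSeq t x y (k + 1)| = |chebSeq t x y (l + 1)| := by
  refine or_iff_not_imp_left.mpr fun hv => ?_
  push Not at hv
  choose ε hε _ hC using h.exists_sign_chebSeq ht hy hv
  have hninj := mt (Set.infinite_of_injective_forall_mem (s := {C | SignedMutEquiv B C})
    (f := fun k => cyclicQ (ε k * chebSeq t x y (k + 1)) t (ε k * chebSeq t x y (k + 2))) · hC)
    (not_not.mpr hB.finite_setOf_signedMutEquiv)
  obtain ⟨k, l, hkl, hne⟩ := Function.not_injective_iff.mp hninj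
  have habs : |chebSeq t x y (k + 1)| = |chebSeq t x y (l + 1)| := by
    have h01 := congrArg (fun M => |M 0 1|) hkl
    simpa [cyclicQ, abs_mul, hε] using h01
  rcases hne.lt_or_gt with hlt | hgt
  · exact ⟨k, l, hlt, habs⟩
  · exact ⟨l, k, hgt, habs.symm⟩

lemma not_mutationFinite_of_strictMono_chebSeq (h : SignedMutEquiv B (cyclicQ x t y))
    (ht : 0 < t) (hy : 0 < y) (hmono : StrictMono (chebSeq t x y)) : ¬ MutationFinite B := by
  intro hB
  have hpos : ∀ k, 0 < chebSeq t x y (k + 1) := fun k =>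
    hy.trans_le (hmono.monotone (by omega : 1 ≤ k + 1))
  rcases hB.chebSeq_eq_zero_or_abs_eq h ht hy with ⟨k, hk⟩ | ⟨k, l, hkl, habs⟩
  · exact (hpos k).ne' hk
  · rw [abs_of_pos (hpos k), abs_of_pos (hpos l)] at habs
    exact (hmono (by omega : k + 1 < l + 1)).ne habs

end Orbit

section Angles

variable {θ : ℝ}

lemma exists_nat_mul_eq_int_mul_pi_of_abs_cos_eq {k l : ℕ} (hkl : k < l)
    (h : |cos (k * θ)| = |cos (l * θ)|) : ∃ N : ℕ, 0 < N ∧ ∃ n : ℤ, N * θ = n * π := by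
  have hcos : cos (2 * (k * θ)) = cos (2 * (l * θ)) := by
    rw [cos_two_mul, cos_two_mul, ← sq_abs (cos (k * θ)), h, sq_abs]
  obtain ⟨n, hn | hn⟩ := cos_eq_cos_iff.mp hcos
  · exact ⟨l - k, by omega, n, by push_cast [hkl.le]; linarith⟩
  · exact ⟨l + k, by omega, n, by push_cast; linarith⟩

lemma exists_nat_mul_eq_int_mul_pi_of_cos_eq_zero {k : ℕ} (h : cos (k * θ) = 0) :
    ∃ N : ℕ, 0 < N ∧ ∃ n : ℤ, N * θ = n * π := by
  have hk : 0 < k := Nat.pos_of_ne_zero fun hk => by simp [hk] at h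
  -- `cos (2 k θ) = -1` has the same absolute value as `cos (0 θ)`.
  refine exists_nat_mul_eq_int_mul_pi_of_abs_cos_eq (k := 0) (l := 2 * k) (by omega) ?_
  rw [Nat.cast_mul, Nat.cast_two, mul_assoc, cos_two_mul, h]
  norm_num

lemma exists_eq_pi_mul_div (hθ0 : 0 < θ) (hθ2 : θ < π / 2) {N : ℕ} (hN : 0 < N) {n : ℤ}
    (h : N * θ = n * π) : ∃ d m : ℕ, 1 ≤ d ∧ 0 < m ∧ 2 * m ≤ d ∧ θ = π * m / d := by
  have hN' : (0 : ℝ) < N := by exact_mod_cast hN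
  have hn0 : (0 : ℝ) < n := by nlinarith [pi_pos]
  lift n to ℕ using by exact_mod_cast hn0.le
  refine ⟨N, n, hN, by exact_mod_cast hn0, ?_, ?_⟩
  · have h2n : 2 * (n : ℝ) * π < N * π := by
      push_cast at h
      nlinarith [mul_lt_mul_of_pos_left hθ2 hN']
    exact_mod_cast (lt_of_mul_lt_mul_right h2n pi_pos.le).le
  · field_simp
    push_cast at h
    linarith

end Angles

namespace MutationFinite

variable {B : Matrix (Fin 3) (Fin 3) ℝ}

lemma not_signedMutEquiv_cyclicQ_two_of_lt (hB : MutationFinite B) {x y : ℝ} (hxy : x < y) :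
    ¬ SignedMutEquiv B (cyclicQ x 2 y) := by
  have key : ∀ {x y : ℝ}, x < y → 0 < y → ¬ SignedMutEquiv B (cyclicQ x 2 y) := by
    intro x y hxy hy h
    refine not_mutationFinite_of_strictMono_chebSeq h two_pos hy (fun k l hkl => ?_) hB
    have hkl' : (k : ℝ) < l := by exact_mod_cast hkl
    simp only [chebSeq_two_eq]
    nlinarith
  intro h
  by_cases hy : 0 < y
  · exact key hxy hy h
  · push Not at hy
    exact key (by linarith) (by linarith) (h.cyclicQ_swap.cyclicQ_neg_right hy zero_le_two)

lemma eq_of_signedMutEquiv_cyclicQ_two (hB : MutationFinite B) {x y : ℝ}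
    (h : SignedMutEquiv B (cyclicQ x 2 y)) (hxy : x ≠ 0 ∨ y ≠ 0) : 0 < x ∧ x = y := by
  rcases lt_trichotomy x y with hlt | rfl | hgt
  · exact absurd h (hB.not_signedMutEquiv_cyclicQ_two_of_lt hlt)
  · refine ⟨lt_of_not_ge fun hx => ?_, rfl⟩
    have hx : x < 0 := lt_of_le_of_ne hx (by tauto)
    exact hB.not_signedMutEquiv_cyclicQ_two_of_lt (by linarith)
      (h.cyclicQ_neg_right hx.le zero_le_two)
  · exact absurd h.cyclicQ_swap (hB.not_signedMutEquiv_cyclicQ_two_of_lt hgt)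

lemma exists_eq_two_mul_cos (hB : MutationFinite B) {t : ℝ}
    (h : SignedMutEquiv B (cyclicQ 2 t t)) (ht : 0 < t) (ht2 : t ≠ 2) :
    ∃ d m : ℕ, 1 ≤ d ∧ 0 < m ∧ 2 * m ≤ d ∧ t = 2 * cos (π * m / d) := by
  rcases ht2.lt_or_gt with ht2 | ht2
  · set θ := arccos (t / 2)
    have hcos : cos θ = t / 2 := cos_arccos (by linarith) (by linarith)
    have hθ0 : 0 < θ := arccos_pos.mpr (by linarith)
    have hθ2 : θ < π / 2 := by
      rw [← arccos_zero]
      exact arccos_lt_arccos (by norm_num) (by linarith) (by linarith)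
    have hrat : ∃ N : ℕ, 0 < N ∧ ∃ n : ℤ, N * θ = n * π := by
      rcases hB.chebSeq_eq_zero_or_abs_eq h ht ht with ⟨k, hk⟩ | ⟨k, l, hkl, habs⟩
      · rw [chebSeq_eq_two_mul_cos ht ht2] at hk
        exact exists_nat_mul_eq_int_mul_pi_of_cos_eq_zero (by linarith)
      · simp only [chebSeq_eq_two_mul_cos ht ht2, abs_mul, abs_two] at habs
        exact exists_nat_mul_eq_int_mul_pi_of_abs_cos_eq (by omega : k + 1 < l + 1)
          (by linarith)
    obtain ⟨N, hN, n, hNn⟩ := hrat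
    obtain ⟨d, m, hd, hm, hmd, hθ⟩ := exists_eq_pi_mul_div hθ0 hθ2 hN hNn
    exact ⟨d, m, hd, hm, hmd, by rw [← hθ, hcos]; ring⟩
  · exact absurd hB (not_mutationFinite_of_strictMono_chebSeq h ht ht
      (strictMono_chebSeq_of_two_lt ht2))

end MutationFinite

/-- A connected mutation-finite rank-3 quiver with an arrow of weight 2 is cyclic,
and up to a simultaneous permutation of indices it is `(2,2,2)` or
`(2, 2cos(πm/d), 2cos(πm/d))`. -/
theorem rank3_double_arrow (B : Matrix (Fin 3) (Fin 3) ℝ)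
    (hskew : IsSkewSymmetric B) (hconn : Connected B) (hfin : MutationFinite B)
    (harrow : ∃ i j : Fin 3, |B i j| = 2) :
    Cyclic B ∧ ∃ σ : Equiv.Perm (Fin 3),
      permute B σ = cyclicQ 2 2 2 ∨
      ∃ d m : ℕ, 1 ≤ d ∧ 0 < m ∧ 2 * m ≤ d ∧
        permute B σ = cyclicQ 2 (2 * Real.cos (π * m / d)) (2 * Real.cos (π * m / d)) := by
  obtain ⟨σ, x, y, hσ⟩ := exists_permute_eq_cyclicQ_two hskew harrow
  have hclass : SignedMutEquiv B (cyclicQ x 2 y) := hσ ▸ (SignedMutEquiv.refl B).permute σ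
  obtain ⟨hx, rfl⟩ := hfin.eq_of_signedMutEquiv_cyclicQ_two hclass
    (ne_zero_or_ne_zero_of_connected_cyclicQ (hσ ▸ hconn.permute σ))
  have hrot : permute B (σ * finRotate 3) = cyclicQ 2 x x := by
    rw [← permute_permute, hσ, permute_cyclicQ_finRotate]
  refine ⟨Cyclic.of_permute (σ := σ) (hσ ▸ cyclic_cyclicQ hx two_pos hx), σ * finRotate 3, ?_⟩
  rcases eq_or_ne x 2 with rfl | hx2
  · exact .inl hrot
  · obtain ⟨d, m, hd, hm, hmd, rfl⟩ :=
      hfin.exists_eq_two_mul_cos (hrot ▸ (SignedMutEquiv.refl B).permute _) hx hx2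
    exact .inr ⟨d, m, hd, hm, hmd, hrot⟩

end RealQuiver
end
end
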